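/- Let (a_n) be nonnegative reals with n·a_n → τ > 0, (k_n) positive integers with k_n → ∞, (α_n) positive integers with α_n → ∞, and C > 0, η > 1 constants with η^{α_n}/k_n → 0. Suppose p_{n,j} ≤ a_n² + C·a_n·j^{-2} for all j ≥ α_n, and p_{n,j} ≤ C·a_n²·η^{α_n} for all 1 ≤ j < α_n. Then n · Σ_{j=1}^{⌊n/k_n⌋} p_{n,j} → 0 as n → ∞. -/

import Mathlib

open Filter Finset

/-!
Each of the `⌊n/k_n⌋` short-range terms is at most `C a_n² η^{α_n}` and each long-range term
at most `a_n² + C a_n / j²`, while the tail `∑_{j ≥ α_n} j⁻²` is at most `2 / α_n`.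
Hence, writing `x_n = n a_n → τ`,
`n ∑ p_{n,j} ≤ x_n² (C η^{α_n} / k_n + 1 / k_n) + 2 C x_n / α_n`,
and every term on the right tends to `0`.
-/

theorem sum_Icc_inv_sq_le {m : ℕ} (hm : m ≠ 0) (N : ℕ) :
    ∑ j ∈ Icc m N, ((j : ℝ) ^ 2)⁻¹ ≤ 2 / m := by
  have hIcc : Icc m N = Ioo (m - 1) (N + 1) := by ext j; simp only [mem_Icc, mem_Ioo]; omega
  simpa [hIcc, Nat.cast_sub (Nat.one_le_iff_ne_zero.mpr hm)] using
    sum_Ioo_inv_sq_le (α := ℝ) (m - 1) (N + 1)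

theorem sum_Icc_le_of_short_long {p : ℕ → ℝ} {α : ℕ} {M b c : ℝ} (hα : α ≠ 0)
    (hM : 0 ≤ M) (hb : 0 ≤ b) (hc : 0 ≤ c)
    (hshort : ∀ j, 1 ≤ j → j < α → p j ≤ M)
    (hlong : ∀ j, α ≤ j → p j ≤ b + c / (j : ℝ) ^ 2)
    (N : ℕ) : ∑ j ∈ Icc 1 N, p j ≤ N * (M + b) + 2 * c / α := by
  have hpoint : ∀ j ∈ Icc 1 N,
      p j ≤ (M + b) + c * (if α ≤ j then ((j : ℝ) ^ 2)⁻¹ else 0) := by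
    intro j hj
    by_cases hαj : α ≤ j
    · simp only [hαj, if_true]
      linarith [hlong j hαj, div_eq_mul_inv c ((j : ℝ) ^ 2)]
    · simp only [hαj, if_false, mul_zero, add_zero]
      linarith [hshort j (mem_Icc.mp hj).1 (not_le.mp hαj)]
  have htail : ∑ j ∈ Icc 1 N, (if α ≤ j then ((j : ℝ) ^ 2)⁻¹ else 0) ≤ 2 / α := by
    have hfilter : (Icc 1 N).filter (α ≤ ·) = Icc α N := by
      ext j; simp only [mem_filter, mem_Icc]; omega
    rw [← sum_filter, hfilter]
    exact sum_Icc_inv_sq_le hα N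
  calc ∑ j ∈ Icc 1 N, p j
      ≤ ∑ j ∈ Icc 1 N, ((M + b) + c * (if α ≤ j then ((j : ℝ) ^ 2)⁻¹ else 0)) :=
        sum_le_sum hpoint
    _ = N * (M + b) + c * ∑ j ∈ Icc 1 N, (if α ≤ j then ((j : ℝ) ^ 2)⁻¹ else 0) := by
        rw [sum_add_distrib, sum_const, Nat.card_Icc, Nat.add_sub_cancel, nsmul_eq_mul, mul_sum]
    _ ≤ N * (M + b) + c * (2 / α) := by gcongr
    _ = N * (M + b) + 2 * c / α := by ring

theorem Dprime_sum_tendsto_zero_random_general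
    (a : ℕ → ℝ) (ha : ∀ n, 0 ≤ a n)
    (τ : ℝ)
    (hna : Tendsto (fun n : ℕ => (n : ℝ) * a n) atTop (nhds τ))
    (k : ℕ → ℕ) (hk : Tendsto k atTop atTop)
    (α : ℕ → ℕ) (hαpos : ∀ n, 0 < α n) (hα : Tendsto α atTop atTop)
    (C η : ℝ) (hC : 0 < C) (hη : 1 < η)
    (hηk : Tendsto (fun n : ℕ => η ^ (α n) / (k n : ℝ)) atTop (nhds 0))
    (p : ℕ → ℕ → ℝ) (hp0 : ∀ n j, 0 ≤ p n j)
    (hlong : ∀ n j, α n ≤ j → p n j ≤ a n ^ 2 + C * a n / (j : ℝ) ^ 2)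
    (hshort : ∀ n j, 1 ≤ j → j < α n → p n j ≤ C * a n ^ 2 * η ^ (α n)) :
    Tendsto (fun n : ℕ => (n : ℝ) * ∑ j ∈ Finset.Icc 1 (n / k n), p n j)
      atTop (nhds 0) := by
  have hbound : ∀ n : ℕ, (n : ℝ) * ∑ j ∈ Icc 1 (n / k n), p n j ≤
      ((n : ℝ) * a n) ^ 2 * (C * (η ^ α n / k n) + (k n : ℝ)⁻¹)
        + 2 * C * ((n : ℝ) * a n) * (α n : ℝ)⁻¹ := fun n => by
    have hsum := sum_Icc_le_of_short_long (hαpos n).ne' (by positivity)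
      (sq_nonneg (a n)) (mul_nonneg hC.le (ha n)) (hshort n) (hlong n) (n / k n)
    calc (n : ℝ) * ∑ j ∈ Icc 1 (n / k n), p n j
        ≤ n * (((n / k n : ℕ) : ℝ) * (C * a n ^ 2 * η ^ α n + a n ^ 2)
            + 2 * (C * a n) / α n) := by
          gcongr
      _ ≤ n * ((n / k n : ℝ) * (C * a n ^ 2 * η ^ α n + a n ^ 2)
            + 2 * (C * a n) / α n) := by
          gcongr
          exact Nat.cast_div_le
      _ = _ := by ring
  have hlim := ((hna.pow 2).mul ((hηk.const_mul C).add
      (tendsto_natCast_atTop_atTop.comp hk).inv_tendsto_atTop)).add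
    ((hna.const_mul (2 * C)).mul (tendsto_natCast_atTop_atTop.comp hα).inv_tendsto_atTop)
  simp only [mul_zero, add_zero] at hlim
  exact squeeze_zero (fun n => mul_nonneg n.cast_nonneg (sum_nonneg fun j _ => hp0 n j))
    hbound hlim

/-- quantitative core of D′(u_n) in the random setting (Theorem D). -/
theorem Dprime_sum_tendsto_zero_random
    (a : ℕ → ℝ) (ha : ∀ n, 0 ≤ a n)
    (τ : ℝ) (hτ : 0 < τ)
    (hna : Tendsto (fun n : ℕ => (n : ℝ) * a n) atTop (nhds τ))
    (k : ℕ → ℕ) (hkpos : ∀ n, 0 < k n) (hk : Tendsto k atTop atTop)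
    (α : ℕ → ℕ) (hαpos : ∀ n, 0 < α n) (hα : Tendsto α atTop atTop)
    (C η : ℝ) (hC : 0 < C) (hη : 1 < η)
    (hηk : Tendsto (fun n : ℕ => η ^ (α n) / (k n : ℝ)) atTop (nhds 0))
    (p : ℕ → ℕ → ℝ) (hp0 : ∀ n j, 0 ≤ p n j)
    (hlong : ∀ n j, α n ≤ j → p n j ≤ a n ^ 2 + C * a n / (j : ℝ) ^ 2)
    (hshort : ∀ n j, 1 ≤ j → j < α n → p n j ≤ C * a n ^ 2 * η ^ (α n)) :
    Tendsto (fun n : ℕ => (n : ℝ) * ∑ j ∈ Finset.Icc 1 (n / k n), p n j)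
      atTop (nhds 0) :=
  Dprime_sum_tendsto_zero_random_general a ha τ hna k hk α hαpos hα C η hC hη hηk p hp0 hlong hshort
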